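/- Let μ ∈ A^× and x = (x₀,0,x₂) ∈ J(A,μ) with x₀μ = μx₀ and N_A(x₂) = 0. Then xx^♯ = x^♯x = N(x)·1 in J(A,μ). -/
import Mathlib


/-- A separable associative algebra of degree three over `F`:
an associative unital `F`-algebra `A` equipped with a cubic norm `NA`,
directional derivative `Ndir x y = N_A(x;y)` (the coefficient of `Z` in
`N_A(x+Zy)`), trace `TA`, quadratic form `SA`, adjoint `sharp` and bilinear
trace `Tbil`, satisfying the degree-3 identity, the trace-sharp formula and
the trace-product formula. -/
structure DegreeThreeAlg (F A : Type*) [Field F] [Ring A] [Algebra F A] where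
  NA : A → F
  Ndir : A → A → F
  TA : A → F
  SA : A → F
  sharp : A → A
  Tbil : A → A → F
  NA_one : NA 1 = 1
  NA_smul : ∀ (c : F) (x : A), NA (c • x) = c ^ 3 * NA x
  Ndir_expand : ∀ (x y : A) (z : F),
    NA (x + z • y) = NA x + z * Ndir x y + z ^ 2 * Ndir y x + z ^ 3 * NA y
  Ndir_add_right : ∀ x y z : A, Ndir x (y + z) = Ndir x y + Ndir x z
  Ndir_smul_right : ∀ (x : A) (c : F) (y : A), Ndir x (c • y) = c * Ndir x y
  TA_def : ∀ x : A, TA x = Ndir 1 x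
  SA_def : ∀ x : A, SA x = Ndir x 1
  sharp_def : ∀ x : A, sharp x = x ^ 2 - TA x • x + SA x • (1 : A)
  Tbil_def : ∀ x y : A,
    Tbil x y = TA x * TA y - (Ndir (1 + y) x - Ndir 1 x - Ndir y x)
  degree3 : ∀ x : A, x ^ 3 - TA x • x ^ 2 + SA x • x - NA x • (1 : A) = 0
  trace_sharp : ∀ x y : A, Tbil (sharp x) y = Ndir x y
  trace_product : ∀ x y : A, Tbil x y = TA (x * y)

variable {F A : Type*} [Field F] [Ring A] [Algebra F A]

/-- Conjugation `x̄ = ½(T_A(x)·1 − x)` in `A`. -/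
noncomputable def bar (D : DegreeThreeAlg F A) (x : A) : A :=
  (2 : F)⁻¹ • (D.TA x • (1 : A) - x)

/-- Linearization of the adjoint in `A`: `x ♯ y = (x+y)^♯ − x^♯ − y^♯`. -/
noncomputable def sharpBil (D : DegreeThreeAlg F A) (x y : A) : A :=
  D.sharp (x + y) - D.sharp x - D.sharp y

/-- `x × y = ½ (x ♯ y)` in `A`. -/
noncomputable def cross (D : DegreeThreeAlg F A) (x y : A) : A :=
  (2 : F)⁻¹ • sharpBil D x y

/-- Multiplication of the generalized first Tits construction `J(A,μ)` on `A ⊕ A ⊕ A`. -/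
noncomputable def Jmul (D : DegreeThreeAlg F A) (μ : Aˣ) (x y : A × A × A) : A × A × A :=
  ((2 : F)⁻¹ • (x.1 * y.1 + y.1 * x.1) + bar D (x.2.1 * y.2.2) + bar D (y.2.1 * x.2.2),
   bar D x.1 * y.2.1 + bar D y.1 * x.2.1 + (↑μ⁻¹ : A) * cross D x.2.2 y.2.2,
   x.2.2 * bar D y.1 + y.2.2 * bar D x.1 + (↑μ : A) * cross D x.2.1 y.2.1)

/-- Adjoint on `J(A,μ)`. -/
noncomputable def Jsharp (D : DegreeThreeAlg F A) (μ : Aˣ) (x : A × A × A) : A × A × A :=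
  (D.sharp x.1 - x.2.1 * x.2.2,
   (↑μ⁻¹ : A) * D.sharp x.2.2 - x.1 * x.2.1,
   (↑μ : A) * D.sharp x.2.1 - x.2.2 * x.1)

/-- Sharp map on `J(A,μ)`: linearization of the adjoint. -/
noncomputable def JsharpBil (D : DegreeThreeAlg F A) (μ : Aˣ) (x y : A × A × A) : A × A × A :=
  Jsharp D μ (x + y) - Jsharp D μ x - Jsharp D μ y

/-- Generalized trace on `J(A,μ)`. -/
def JT (D : DegreeThreeAlg F A) (x : A × A × A) : F := D.TA x.1

/-- Generalized bilinear trace on `J(A,μ)`. -/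
def JTbil (D : DegreeThreeAlg F A) (x y : A × A × A) : F :=
  D.TA (x.1 * y.1) + D.TA (x.2.1 * y.2.2) + D.TA (x.2.2 * y.2.1)

/-- Generalized cubic norm `N : J(A,μ) → A`. -/
noncomputable def JN (D : DegreeThreeAlg F A) (μ : Aˣ) (x : A × A × A) : A :=
  D.NA x.1 • (1 : A) + D.NA x.2.1 • (↑μ : A) + D.NA x.2.2 • (↑μ⁻¹ : A)
    - D.TA (x.1 * x.2.1 * x.2.2) • (1 : A)

/-- The unit `1 = (1,0,0)` of `J(A,μ)`. -/
def Jone : A × A × A := ((1 : A), (0 : A), (0 : A))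

section MyHelpers
variable {F A : Type*} [Field F] [Ring A] [Algebra F A] (D : DegreeThreeAlg F A)

lemma myTA_add (x y : A) : D.TA (x + y) = D.TA x + D.TA y := by
  rw [D.TA_def, D.TA_def, D.TA_def, D.Ndir_add_right]

lemma myTA_smul (c : F) (x : A) : D.TA (c • x) = c * D.TA x := by
  rw [D.TA_def, D.TA_def, D.Ndir_smul_right]

lemma myTA_zero : D.TA 0 = 0 := by
  have := myTA_smul D (0 : F) 0; simpa using this

lemma myTA_neg (x : A) : D.TA (-x) = -D.TA x := by
  have := myTA_smul D (-1 : F) x; simpa using this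

lemma myTA_sub (x y : A) : D.TA (x - y) = D.TA x - D.TA y := by
  rw [sub_eq_add_neg, myTA_add, myTA_neg, sub_eq_add_neg]

lemma myNA_zero : D.NA 0 = 0 := by
  have := D.NA_smul 0 0; simpa using this

lemma myTA_one (h2 : (2 : F) ≠ 0) : D.TA 1 = 3 := by
  have h := D.Ndir_expand 1 1 1
  have e : (1 : A) + (1 : F) • (1 : A) = (2 : F) • 1 := by
    rw [one_smul, two_smul]
  rw [e, D.NA_smul, D.NA_one] at h
  rw [D.TA_def]
  exact mul_left_cancel₀ h2 (by linear_combination -h)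

lemma mySA (h2 : (2 : F) ≠ 0) (x : A) :
    D.SA x = (2 : F)⁻¹ * (D.TA x ^ 2 - D.TA (x * x)) := by
  have h := D.trace_sharp x 1
  rw [D.trace_product, mul_one, D.sharp_def, ← D.SA_def, sq, sub_eq_add_neg,
    myTA_add, myTA_add, myTA_neg, myTA_smul, myTA_smul, myTA_one D h2] at h
  -- h : TA(x*x) + -(TA x * TA x) + SA x * 3 = SA x
  rw [inv_mul_eq_div, eq_div_iff h2]
  linear_combination h

lemma mysharp (h2 : (2 : F) ≠ 0) (x : A) :
    D.sharp x = x * x - D.TA x • x + ((2 : F)⁻¹ * (D.TA x ^ 2 - D.TA (x * x))) • (1 : A) := by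
  rw [D.sharp_def, ← mySA D h2, sq]

lemma mytr (x y : A) : D.TA (x * y) = D.TA (y * x) := by
  have e1 := D.Ndir_expand (1 + x) y 1
  have e2 := D.Ndir_expand (1 + y) x 1
  rw [one_smul] at e1 e2
  rw [show (1 : A) + y + x = 1 + x + y by abel] at e2
  have e3 := D.Ndir_expand 1 x 1
  have e4 := D.Ndir_expand 1 y 1
  rw [one_smul, D.NA_one] at e3 e4
  have e7 := D.Ndir_add_right y 1 x
  have e8 := D.Ndir_add_right x 1 y
  have h5 := D.Tbil_def x y
  have h6 := D.Tbil_def y x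
  rw [D.trace_product] at h5 h6
  have t1 := D.TA_def x
  have t2 := D.TA_def y
  have s1 := D.SA_def x
  have s2 := D.SA_def y
  linear_combination h5 - h6 - e1 + e2 - e3 + e4 - e7 + e8

lemma myNdir (h2 : (2 : F) ≠ 0) (x y : A) :
    D.Ndir x y = D.TA (x * (x * y)) - D.TA x * D.TA (x * y)
      + ((2 : F)⁻¹ * (D.TA x ^ 2 - D.TA (x * x))) * D.TA y := by
  rw [← D.trace_sharp, D.trace_product, mysharp D h2, add_mul, sub_mul, smul_mul_assoc,
    smul_mul_assoc, one_mul, myTA_add, myTA_sub, myTA_smul, myTA_smul, mul_assoc]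

lemma mycube (a : A) :
    a * (a * a) = D.TA a • (a * a) - D.SA a • a + D.NA a • (1 : A) := by
  have e := D.degree3 a
  simp only [pow_succ, pow_zero, one_mul] at e
  rw [mul_assoc] at e
  linear_combination (norm := module) e

end MyHelpers

section MyL
variable {F A : Type*} [Field F] [Ring A] [Algebra F A] (D : DegreeThreeAlg F A)

lemma myTA_mul_expand (x y : A) :
    D.TA ((x + y) * (x + y)) = D.TA (x*x) + D.TA (x*y) + D.TA (y*x) + D.TA (y*y) := by
  rw [mul_add, add_mul, add_mul, myTA_add, myTA_add, myTA_add]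
  ring

lemma myTA_mul_expand' (x y : A) :
    D.TA ((x - y) * (x - y)) = D.TA (x*x) - D.TA (x*y) - D.TA (y*x) + D.TA (y*y) := by
  rw [mul_sub, sub_mul, sub_mul, myTA_sub, myTA_sub, myTA_sub]
  ring

lemma mySA_add (h2 : (2 : F) ≠ 0) (x y : A) :
    D.SA (x + y) = D.SA x + D.SA y + (D.TA x * D.TA y - D.TA (x * y)) := by
  rw [mySA D h2, mySA D h2, mySA D h2, myTA_add, myTA_mul_expand, mytr D y x]
  field_simp
  ring

lemma mySA_sub (h2 : (2 : F) ≠ 0) (x y : A) :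
    D.SA (x - y) = D.SA x + D.SA y - (D.TA x * D.TA y - D.TA (x * y)) := by
  rw [mySA D h2, mySA D h2, mySA D h2, myTA_sub, myTA_mul_expand', mytr D y x]
  field_simp
  ring

lemma myNA_add (x y : A) :
    D.NA (x + y) = D.NA x + D.Ndir x y + D.Ndir y x + D.NA y := by
  have := D.Ndir_expand x y 1
  simpa using this

lemma myNA_sub (x y : A) :
    D.NA (x - y) = D.NA x - D.Ndir x y + D.Ndir y x - D.NA y := by
  have h := D.Ndir_expand x y (-1)
  rw [neg_one_smul, ← sub_eq_add_neg] at h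
  rw [h]; ring

lemma myL (h2 : (2 : F) ≠ 0) (x₀ x₂ : A) :
    x₂ * (x₂ * x₀) + x₂ * (x₀ * x₂) + x₀ * (x₂ * x₂)
      = D.TA x₂ • (x₂ * x₀) + D.TA x₂ • (x₀ * x₂) + D.TA x₀ • (x₂ * x₂)
        - D.SA x₂ • x₀ - (D.TA x₂ * D.TA x₀ - D.TA (x₂ * x₀)) • x₂
        + D.Ndir x₂ x₀ • (1 : A) := by
  have h1 := mycube D (x₂ + x₀)
  have hm := mycube D (x₂ - x₀)
  have h3 := mycube D x₀
  rw [myTA_add, mySA_add D h2, myNA_add] at h1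
  rw [myTA_sub, mySA_sub D h2, myNA_sub] at hm
  simp only [mul_add, add_mul, mul_sub, sub_mul, smul_add, smul_sub, add_smul, sub_smul,
    mul_assoc] at h1 hm
  apply smul_right_injective A h2
  linear_combination (norm := module) h1 - hm - (2:F) • h3

end MyL

section MyFinal
variable {F A : Type*} [Field F] [Ring A] [Algebra F A] (D : DegreeThreeAlg F A)

lemma mySA_zero (h2 : (2 : F) ≠ 0) : D.SA 0 = 0 := by
  rw [mySA D h2]
  simp [myTA_zero]

lemma mysharp_zero (h2 : (2 : F) ≠ 0) : D.sharp 0 = 0 := by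
  rw [D.sharp_def, mySA_zero D h2]
  simp [myTA_zero]

lemma mybar_zero : bar D 0 = 0 := by
  simp [bar, myTA_zero]

lemma mycross_zero_left (h2 : (2 : F) ≠ 0) (z : A) : cross D 0 z = 0 := by
  simp [cross, sharpBil, mysharp_zero D h2]

lemma mycross_comm (a b : A) : cross D a b = cross D b a := by
  unfold cross sharpBil
  rw [add_comm b a, sub_sub, sub_sub, add_comm (D.sharp a)]

lemma mycross_zero_right (h2 : (2 : F) ≠ 0) (z : A) : cross D z 0 = 0 := by
  rw [mycross_comm, mycross_zero_left D h2]

lemma myTA_sharp (h2 : (2 : F) ≠ 0) (x : A) : D.TA (D.sharp x) = D.SA x := by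
  rw [D.sharp_def, sub_eq_add_neg, myTA_add, myTA_add, myTA_neg, myTA_smul, myTA_smul,
    myTA_one D h2, pow_two, mySA D h2]
  field_simp
  ring

lemma mysharp_sub (h2 : (2 : F) ≠ 0) (x y : A) :
    D.sharp (x - y) = D.sharp x + D.sharp y - (x * y + y * x) + D.TA x • y + D.TA y • x
      - (D.TA x * D.TA y - D.TA (x * y)) • (1 : A) := by
  rw [D.sharp_def, D.sharp_def, D.sharp_def, mySA_sub D h2, myTA_sub, pow_two, pow_two,
    pow_two]
  simp only [mul_sub, sub_mul, sub_smul, add_smul, smul_sub]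
  module

lemma mysharp_neg (h2 : (2 : F) ≠ 0) (y : A) : D.sharp (-y) = D.sharp y := by
  have hSA : D.SA (-y) = D.SA y := by
    rw [mySA D h2, mySA D h2, myTA_neg, neg_mul_neg]
    ring
  rw [D.sharp_def, D.sharp_def, hSA, myTA_neg, pow_two, pow_two, neg_mul_neg, neg_smul,
    smul_neg, sub_neg_eq_add, sub_eq_add_neg (y*y)]

lemma myhalf_add (h2 : (2 : F) ≠ 0) (a : A) : (2 : F)⁻¹ • (a + a) = a := by
  rw [← two_smul F a, smul_smul, inv_mul_cancel₀ h2, one_smul]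

lemma myNdir' (h2 : (2 : F) ≠ 0) (x y : A) :
    D.Ndir x y = D.TA (x * (x * y)) - D.TA x * D.TA (x * y) + D.SA x * D.TA y := by
  rw [myNdir D h2 x y, mySA D h2]

/-- the key component-1 identity -/
lemma myC1 (h2 : (2 : F) ≠ 0) (x₀ x₂ : A) :
    bar D x₀ * D.sharp x₂ + cross D x₂ (-(x₂ * x₀)) = 0 := by
  unfold bar cross sharpBil
  rw [show x₂ + -(x₂ * x₀) = x₂ - x₂ * x₀ from (sub_eq_add_neg _ _).symm,
    mysharp_sub D h2, mysharp_neg D h2]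
  have hL := myL D h2 x₀ x₂
  rw [myNdir' D h2 x₂ x₀] at hL
  rw [D.sharp_def x₂, pow_two]
  simp only [mul_add, add_mul, mul_sub, sub_mul, smul_add, smul_sub, add_smul, sub_smul,
    mul_smul_comm, smul_mul_assoc, mul_one, one_mul, mul_assoc, mul_neg, neg_mul] at hL ⊢
  linear_combination (norm := module) (-(2:F)⁻¹) • hL

/-- the key component-2 identity -/
lemma myC2 (h2 : (2 : F) ≠ 0) (x₀ x₂ : A) :
    x₂ * bar D (D.sharp x₀) = (x₂ * x₀) * bar D x₀ := by
  unfold bar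
  rw [myTA_sharp D h2, D.sharp_def, pow_two]
  simp only [mul_sub, sub_mul, mul_smul_comm, smul_mul_assoc, mul_one, one_mul, mul_assoc,
    smul_sub, mul_add, smul_add]
  module

theorem Jsharp_mul_special' (h2 : (2 : F) ≠ 0) (D : DegreeThreeAlg F A) (μ : Aˣ)
    (hsh : ∀ y : A, y * D.sharp y = D.NA y • (1 : A) ∧ D.sharp y * y = D.NA y • (1 : A)) :
    ∀ x₀ x₂ : A, x₀ * (↑μ : A) = (↑μ : A) * x₀ → D.NA x₂ = 0 →
      Jmul D μ (x₀, 0, x₂) (Jsharp D μ (x₀, 0, x₂)) = (JN D μ (x₀, 0, x₂), 0, 0) ∧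
      Jmul D μ (Jsharp D μ (x₀, 0, x₂)) (x₀, 0, x₂) = (JN D μ (x₀, 0, x₂), 0, 0) := by
  intro x₀ x₂ hcomm hN2
  have hx0mi : x₀ * (↑μ⁻¹ : A) = (↑μ⁻¹ : A) * x₀ := by
    have h := congrArg (fun t => (↑μ⁻¹ : A) * t * (↑μ⁻¹ : A)) hcomm
    simp only [mul_assoc, ← mul_assoc (↑μ⁻¹ : A) (↑μ : A), μ.inv_mul, one_mul, mul_one,
      μ.mul_inv] at h
    exact h.symm
  -- sharp x₂ * x₂ = 0
  have hs2 : D.sharp x₂ * x₂ = 0 := by rw [(hsh x₂).2, hN2, zero_smul]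
  have hJN : JN D μ (x₀, 0, x₂) = D.NA x₀ • (1 : A) := by
    simp [JN, myNA_zero, hN2, myTA_zero]
  have hfac : bar D x₀ * ((↑μ⁻¹ : A) * D.sharp x₂)
      = (↑μ⁻¹ : A) * (bar D x₀ * D.sharp x₂) := by
    have h' : x₀ * ((↑μ⁻¹ : A) * D.sharp x₂) = (↑μ⁻¹ : A) * (x₀ * D.sharp x₂) := by
      rw [← mul_assoc, hx0mi, mul_assoc]
    simp only [bar, smul_mul_assoc, mul_smul_comm, sub_mul, mul_sub, one_mul]
    rw [h']
  constructor
  · simp only [Jmul, Jsharp, Prod.mk.injEq, zero_mul, mul_zero, sub_zero, zero_sub,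
      mysharp_zero D h2, mul_neg, neg_mul]
    refine ⟨?_, ?_, ?_⟩
    · rw [(hsh x₀).1, (hsh x₀).2, mul_assoc, hs2, mul_zero, mybar_zero, neg_zero,
        mybar_zero, add_zero, add_zero, hJN, myhalf_add h2]
    · rw [add_zero, hfac, ← mul_add, myC1 D h2 x₀ x₂, mul_zero]
    · rw [mycross_zero_left D h2, mul_zero, add_zero, myC2 D h2 x₀ x₂, mul_assoc,
        add_neg_cancel]
  · simp only [Jmul, Jsharp, Prod.mk.injEq, zero_mul, mul_zero, sub_zero, zero_sub,
      mysharp_zero D h2, mul_neg, neg_mul]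
    refine ⟨?_, ?_, ?_⟩
    · rw [(hsh x₀).1, (hsh x₀).2, mul_assoc, hs2, mul_zero, mybar_zero, neg_zero,
        mybar_zero, add_zero, add_zero, hJN, myhalf_add h2]
    · rw [zero_add, hfac, mycross_comm D (-(x₂*x₀)) x₂, ← mul_add, myC1 D h2 x₀ x₂,
        mul_zero]
    · rw [mycross_zero_right D h2, mul_zero, add_zero, myC2 D h2 x₀ x₂, mul_assoc,
        neg_add_cancel]

end MyFinal

/-- For `x = (x₀,0,x₂)` with `x₀μ = μx₀` and `N_A(x₂) = 0`:
`x x^♯ = x^♯ x = N(x)·1` in `J(A,μ)`. -/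
theorem Jsharp_mul_special (F A : Type*) [Field F] [Ring A] [Algebra F A]
    (h2 : (2 : F) ≠ 0) (h3 : (3 : F) ≠ 0) (D : DegreeThreeAlg F A) (μ : Aˣ)
    (hsh : ∀ y : A, y * D.sharp y = D.NA y • (1 : A) ∧ D.sharp y * y = D.NA y • (1 : A))
    (hadj : ∀ y : A, D.sharp (D.sharp y) = D.NA y • y) :
    ∀ x₀ x₂ : A, x₀ * (↑μ : A) = (↑μ : A) * x₀ → D.NA x₂ = 0 →
      Jmul D μ (x₀, 0, x₂) (Jsharp D μ (x₀, 0, x₂)) = (JN D μ (x₀, 0, x₂), 0, 0) ∧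
      Jmul D μ (Jsharp D μ (x₀, 0, x₂)) (x₀, 0, x₂) = (JN D μ (x₀, 0, x₂), 0, 0) := by
  exact fun x₀ x₂ h hN => Jsharp_mul_special' h2 D μ hsh x₀ x₂ h hN
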